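/- arXiv:2108.12775 — 9 statements merged into one kernel-verified Lean document; each statement's English description precedes it below -/
import Mathlib

section
/- For every real number α > 1 and every integer n ≥ 3, one has ((2n)^α + 2^α)^(1/α) > ((2n-2)^α + 4^α)^(1/α). -/
/-! Since `2 + 2n = 4 + (2n - 2)` and `2 < 4 ≤ 2n - 2 < 2n`, the pair `(4, 2n - 2)` is strictly
less spread out than `(2, 2n)`, so strict convexity of `t ↦ t ^ α` gives
`4 ^ α + (2n - 2) ^ α < 2 ^ α + (2n) ^ α`; taking `α`-th roots preserves the inequality. -/

section

variable {𝕜 : Type*} [Field 𝕜] [LinearOrder 𝕜] [IsStrictOrderedRing 𝕜] {s : Set 𝕜} {f : 𝕜 → 𝕜}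

theorem StrictConvexOn.map_add_map_lt_of_add_eq (hf : StrictConvexOn 𝕜 s f) {x y z w : 𝕜}
    (hx : x ∈ s) (hw : w ∈ s) (hxy : x < y) (hyw : y < w) (hsum : y + z = x + w) :
    f y + f z < f x + f w := by
  have hy := hf.secant_strict_mono_aux1 hx hw hxy hyw
  have hz := hf.secant_strict_mono_aux1 hx hw (y := z) (by linarith) (by linarith)
  have hscaled : (w - x) * (f y + f z) < (w - x) * (f x + f w) := by
    have hz' : z = x + w - y := by linear_combination hsum
    subst hz'
    linear_combination hy + hz
  exact lt_of_mul_lt_mul_left hscaled (by linarith)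

end

theorem stmt_0 (α : ℝ) (hα : 1 < α) (n : ℕ) (hn : 3 ≤ n) :
    ((2 * (n : ℝ)) ^ α + 2 ^ α) ^ (1 / α) >
      ((2 * (n : ℝ) - 2) ^ α + 4 ^ α) ^ (1 / α) := by
  have hn' : (3 : ℝ) ≤ n := by exact_mod_cast hn
  have hsum : (4 : ℝ) ^ α + (2 * n - 2) ^ α < 2 ^ α + (2 * n) ^ α :=
    (strictConvexOn_rpow hα).map_add_map_lt_of_add_eq (by norm_num) (by simp)
      (by norm_num) (by linarith) (by ring)
  have hbase : (0 : ℝ) ≤ 2 * n - 2 := by linarith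
  exact Real.rpow_lt_rpow (by positivity) (by linarith) (by positivity)
end

section
/- Let α > 1 be real and p a positive integer. For fixed s > 0, the function δ(t) = ((s+p)^α + t^α)^(1/α) − (s^α + t^α)^(1/α) is positive and strictly decreasing in t on (0,∞). -/
/-!
Put `d = (s + p)^α - s^α > 0` and `x = s^α + t^α`; then `δ(t) = (x + d)^(1/α) - x^(1/α)`.
Positivity is monotonicity of `x ↦ x^(1/α)`. Since `1/α < 1`, this power is strictly concave,
so its increments over intervals of fixed length `d` strictly decrease as the interval moves
right; and `x` strictly increases with `t`.
-/

open Set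

section ConcaveIncrement

variable {𝕜 : Type*} [Field 𝕜] [LinearOrder 𝕜] [IsStrictOrderedRing 𝕜] {s : Set 𝕜} {f : 𝕜 → 𝕜}

theorem StrictConcaveOn.sub_lt_sub_of_lt (hf : StrictConcaveOn 𝕜 s f) {x y d : 𝕜} (hx : x ∈ s)
    (hy : y ∈ s) (hxd : x + d ∈ s) (hyd : y + d ∈ s) (hd : 0 < d) (hxy : x < y) :
    f (y + d) - f y < f (x + d) - f x := by
  -- the secant slopes over `[y, y + d]`, `[x, y + d]`, `[x, x + d]` strictly increase
  have h₁ : (f y - f (y + d)) / (y - (y + d)) < (f x - f (y + d)) / (x - (y + d)) :=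
    hf.secant_strict_mono hyd hx hy (by linarith) (by linarith) hxy
  have h₂ : (f (y + d) - f x) / (y + d - x) < (f (x + d) - f x) / (x + d - x) :=
    hf.secant_strict_mono hx hxd hyd (by linarith) (by linarith) (by linarith)
  rw [← neg_div_neg_eq (f y - _), ← neg_div_neg_eq (f x - _)] at h₁
  simp only [neg_sub, add_sub_cancel_left] at h₁ h₂
  exact (div_lt_div_iff_of_pos_right hd).1 (h₁.trans h₂)

theorem StrictConcaveOn.strictAntiOn_add_sub {a d : 𝕜} (hf : StrictConcaveOn 𝕜 (Ici a) f)
    (hd : 0 < d) : StrictAntiOn (fun x => f (x + d) - f x) (Ici a) := by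
  intro x hx y hy hxy
  have shift : ∀ z ∈ Ici a, z + d ∈ Ici a := fun z hz => le_add_of_le_of_nonneg hz hd.le
  exact hf.sub_lt_sub_of_lt hx hy (shift x hx) (shift y hy) hd hxy

end ConcaveIncrement

theorem Real.strictAntiOn_rpow_add_sub_rpow {q d : ℝ} (hq₀ : 0 < q) (hq₁ : q < 1) (hd : 0 < d) :
    StrictAntiOn (fun x : ℝ => (x + d) ^ q - x ^ q) (Ici 0) :=
  (Real.strictConcaveOn_rpow hq₀ hq₁).strictAntiOn_add_sub hd

theorem stmt_4 (α : ℝ) (hα : 1 < α) (p : ℕ) (hp : 0 < p) (s : ℝ) (hs : 0 < s) :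
    (∀ t : ℝ, 0 < t →
        0 < ((s + (p : ℝ)) ^ α + t ^ α) ^ (1 / α) - (s ^ α + t ^ α) ^ (1 / α)) ∧
      StrictAntiOn
        (fun t : ℝ => ((s + (p : ℝ)) ^ α + t ^ α) ^ (1 / α) - (s ^ α + t ^ α) ^ (1 / α))
        (Set.Ioi (0 : ℝ)) := by
  have hα₀ : 0 < α := by linarith
  set d := (s + p) ^ α - s ^ α with hd_def
  have hd : 0 < d := sub_pos.2 <| Real.rpow_lt_rpow hs.le (by simp [hp]) hα₀
  have hδ : ∀ t : ℝ, ((s + p) ^ α + t ^ α) ^ (1 / α) - (s ^ α + t ^ α) ^ (1 / α) =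
      (s ^ α + t ^ α + d) ^ (1 / α) - (s ^ α + t ^ α) ^ (1 / α) := fun t => by
    congr 2; rw [hd_def]; ring
  simp only [hδ]
  refine ⟨fun t ht => sub_pos.2 <| Real.rpow_lt_rpow (by positivity) (by linarith)
    (by positivity), ?_⟩
  have hinner : StrictMonoOn (fun t : ℝ => s ^ α + t ^ α) (Ioi 0) := fun t₁ ht₁ t₂ _ ht =>
    add_lt_add_right (Real.rpow_lt_rpow (le_of_lt ht₁) ht hα₀) _
  exact (Real.strictAntiOn_rpow_add_sub_rpow (by positivity) ((div_lt_one hα₀).2 hα) hd)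
    |>.comp_strictMonoOn hinner fun t (ht : 0 < t) => show 0 ≤ s ^ α + t ^ α by positivity
end

section
/- Let α > 1 be real and p a positive integer. For fixed t > 0, the function s ↦ ((s+p)^α + t^α)^(1/α) − (s^α + t^α)^(1/α) is strictly increasing in s on (0,∞). -/
/-! With `g s = (s ^ α + t ^ α) ^ (1 / α)`, the function is `s ↦ g (s + p) - g s`, whose derivative
`g' (s + p) - g' s` is positive because `g' s = (s ^ α / (s ^ α + t ^ α)) ^ ((α - 1) / α)` is strictly
increasing: `s ^ α / (s ^ α + t ^ α)` increases in `s` and `(α - 1) / α > 0`. -/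

open Set

theorem strictMonoOn_sub_comp_add_of_hasDerivAt {g g' : ℝ → ℝ} {a b : ℝ} (ha : 0 < a)
    (hg : ∀ x ∈ Ioi b, HasDerivAt g (g' x) x) (hg' : StrictMonoOn g' (Ioi b)) :
    StrictMonoOn (fun s => g (s + a) - g s) (Ioi b) := by
  have hshift : ∀ x ∈ Ioi b, x + a ∈ Ioi b := fun x hx => by
    simp only [mem_Ioi] at hx ⊢; linarith
  have hderiv : ∀ x ∈ Ioi b, HasDerivAt (fun s => g (s + a) - g s) (g' (x + a) - g' x) x :=
    fun x hx => ((hg _ (hshift x hx)).comp_add_const x a).sub (hg x hx)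
  apply strictMonoOn_of_deriv_pos (convex_Ioi b)
  · exact fun x hx => (hderiv x hx).continuousAt.continuousWithinAt
  · intro x hx
    rw [interior_Ioi] at hx
    rw [(hderiv x hx).deriv, sub_pos]
    exact hg' hx (hshift x hx) (lt_add_of_pos_right x ha)

theorem hasDerivAt_rpow_add_const_rpow_inv {α c x : ℝ} (hα : α ≠ 0) (hc : 0 ≤ c) (hx : 0 < x) :
    HasDerivAt (fun s : ℝ => (s ^ α + c) ^ (1 / α))
      (x ^ (α - 1) * (x ^ α + c) ^ (1 / α - 1)) x := by
  have hsum : 0 < x ^ α + c := by positivity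
  have hinner : HasDerivAt (fun s : ℝ => s ^ α + c) (α * x ^ (α - 1)) x :=
    (Real.hasDerivAt_rpow_const (Or.inl hx.ne')).add_const c
  refine ((Real.hasDerivAt_rpow_const (p := 1 / α) (Or.inl hsum.ne')).comp x hinner).congr_deriv ?_
  field_simp

theorem rpow_sub_one_mul_rpow_add_const_eq {α c x : ℝ} (hα : 0 < α) (hc : 0 ≤ c) (hx : 0 < x) :
    x ^ (α - 1) * (x ^ α + c) ^ (1 / α - 1) = (x ^ α / (x ^ α + c)) ^ ((α - 1) / α) := by
  have hsum : 0 < x ^ α + c := by positivity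
  have hnum : (x ^ α) ^ ((α - 1) / α) = x ^ (α - 1) := by
    rw [← Real.rpow_mul hx.le]
    congr 1
    field_simp
  have hden : (x ^ α + c) ^ (1 / α - 1) = ((x ^ α + c) ^ ((α - 1) / α))⁻¹ := by
    rw [← Real.rpow_neg hsum.le]
    congr 1
    field_simp
    ring
  rw [Real.div_rpow (by positivity) hsum.le, hnum, hden, ← div_eq_mul_inv]

theorem strictMonoOn_rpow_sub_one_mul_rpow_add_const {α c : ℝ} (hα : 1 < α) (hc : 0 < c) :
    StrictMonoOn (fun x : ℝ => x ^ (α - 1) * (x ^ α + c) ^ (1 / α - 1)) (Ioi 0) := by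
  have hα0 : 0 < α := one_pos.trans hα
  intro x hx y hy hxy
  simp only [mem_Ioi] at hx hy
  dsimp only
  rw [rpow_sub_one_mul_rpow_add_const_eq hα0 hc.le hx, rpow_sub_one_mul_rpow_add_const_eq hα0 hc.le hy]
  refine Real.rpow_lt_rpow (by positivity) ?_ (div_pos (by linarith) hα0)
  rw [div_lt_div_iff₀ (by positivity) (by positivity)]
  have hpow : x ^ α < y ^ α := Real.rpow_lt_rpow hx.le hxy hα0
  nlinarith

theorem stmt_5 (α : ℝ) (hα : 1 < α) (p : ℕ) (hp : 0 < p) (t : ℝ) (ht : 0 < t) :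
    StrictMonoOn
      (fun s : ℝ => ((s + (p : ℝ)) ^ α + t ^ α) ^ (1 / α) - (s ^ α + t ^ α) ^ (1 / α))
      (Set.Ioi (0 : ℝ)) := by
  have htα : 0 < t ^ α := by positivity
  exact strictMonoOn_sub_comp_add_of_hasDerivAt (Nat.cast_pos.mpr hp)
    (fun x hx => hasDerivAt_rpow_add_const_rpow_inv (by linarith) htα.le hx)
    (strictMonoOn_rpow_sub_one_mul_rpow_add_const hα htα)
end

section
/- Let a, b, d be positive real numbers with a ≥ b, a ≠ b, and d < (a+b)/2 (as holds when a, b are the lengths of two sides MA, MB of a triangle and d the length of the median MO to the third side). Then for every real β ≥ 1/2, a^(2β) + b^(2β) > 2·d^(2β). -/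
theorem stmt_6 (a b d : ℝ) (ha : 0 < a) (hb : 0 < b) (hd : 0 < d)
    (hab : a ≥ b) (hne : a ≠ b) (hmed : d < (a + b) / 2)
    (β : ℝ) (hβ : (1 : ℝ) / 2 ≤ β) :
    a ^ (2 * β) + b ^ (2 * β) > 2 * d ^ (2 * β) := by
  have hp : (1 : ℝ) ≤ 2 * β := by linarith
  have hc := convexOn_rpow hp
  have h1 := hc.2 (Set.mem_Ici.mpr ha.le) (Set.mem_Ici.mpr hb.le)
    (by norm_num : (0:ℝ) ≤ 1/2) (by norm_num : (0:ℝ) ≤ 1/2) (by norm_num)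
  simp only [smul_eq_mul] at h1
  have h2 : d ^ (2 * β) < ((a + b) / 2) ^ (2 * β) :=
    Real.rpow_lt_rpow hd.le hmed (by linarith)
  have h3 : (1/2 : ℝ) * a + 1/2 * b = (a + b) / 2 := by ring
  rw [h3] at h1
  linarith
end

section
/- Let s > 2 and t > 2 be real numbers, and let α ≥ 1 and β > 1 be reals. Then ((s+2)^α + t^α)^β + ((s-2)^α + t^α)^β ≥ 2·(s^α + t^α)^β. -/
theorem stmt_7 (s t α β : ℝ) (hs : 2 < s) (ht : 2 < t) (hα : 1 ≤ α) (hβ : 1 < β) :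
    ((s + 2) ^ α + t ^ α) ^ β + ((s - 2) ^ α + t ^ α) ^ β ≥
      2 * (s ^ α + t ^ α) ^ β := by
  have hcα := convexOn_rpow hα
  have hcβ := convexOn_rpow hβ.le
  have hs2 : (0:ℝ) ≤ s - 2 := by linarith
  have hs2' : (0:ℝ) ≤ s + 2 := by linarith
  have ht0 : (0:ℝ) ≤ t := by linarith
  have h1 : s ^ α ≤ ((s+2)^α + (s-2)^α)/2 := by
    have := hcα.2 (Set.mem_Ici.mpr hs2') (Set.mem_Ici.mpr hs2)
      (by norm_num : (0:ℝ) ≤ 1/2) (by norm_num : (0:ℝ) ≤ 1/2) (by norm_num)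
    simp only [smul_eq_mul] at this
    have heq : (1/2 : ℝ) * (s+2) + (1/2 : ℝ) * (s-2) = s := by ring
    rw [heq] at this
    linarith
  set A := (s+2)^α + t^α with hA
  set B := (s-2)^α + t^α with hB
  set C := s^α + t^α with hC
  have hA0 : 0 ≤ A := by positivity
  have hB0 : 0 ≤ B := by positivity
  have hC0 : 0 ≤ C := by positivity
  have h2 : ((A+B)/2)^β ≤ (A^β + B^β)/2 := by
    have := hcβ.2 (Set.mem_Ici.mpr hA0) (Set.mem_Ici.mpr hB0)
      (by norm_num : (0:ℝ) ≤ 1/2) (by norm_num : (0:ℝ) ≤ 1/2) (by norm_num)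
    simp only [smul_eq_mul] at this
    have heq : (1/2 : ℝ) * A + (1/2 : ℝ) * B = (A+B)/2 := by ring
    rw [heq] at this
    linarith
  have h3 : C ≤ (A+B)/2 := by
    rw [hA, hB, hC]; linarith
  have h4 : C^β ≤ ((A+B)/2)^β := Real.rpow_le_rpow hC0 h3 (by linarith)
  linarith
end

section
/- Let s > 2 and t > 2 be real numbers, and let α ≥ 1 and β > 1 be reals. Then ((s+2)^α + (t-2)^α)^β + ((s-2)^α + (t+2)^α)^β ≥ 2·(s^α + t^α)^β. -/
lemma aux_conv (p : ℝ) (hp : 1 ≤ p) (a b : ℝ) (ha : 0 ≤ a) (hb : 0 ≤ b) :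
    2 * ((a + b) / 2) ^ p ≤ a ^ p + b ^ p := by
  have h := (convexOn_rpow hp).2 (Set.mem_Ici.mpr ha) (Set.mem_Ici.mpr hb)
    (by norm_num : (0:ℝ) ≤ 1/2) (by norm_num : (0:ℝ) ≤ 1/2) (by norm_num)
  simp only [smul_eq_mul] at h
  have e1 : (1/2 : ℝ) * a + 1/2 * b = (a + b) / 2 := by ring
  rw [e1] at h
  nlinarith [h]

theorem stmt_8 (s t α β : ℝ) (hs : 2 < s) (ht : 2 < t) (hα : 1 ≤ α) (hβ : 1 < β) :
    ((s + 2) ^ α + (t - 2) ^ α) ^ β + ((s - 2) ^ α + (t + 2) ^ α) ^ β ≥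
      2 * (s ^ α + t ^ α) ^ β := by
  set A := (s + 2) ^ α + (t - 2) ^ α with hA
  set B := (s - 2) ^ α + (t + 2) ^ α with hB
  have hs2 : (0:ℝ) ≤ s - 2 := by linarith
  have ht2 : (0:ℝ) ≤ t - 2 := by linarith
  have hs2' : (0:ℝ) ≤ s + 2 := by linarith
  have ht2' : (0:ℝ) ≤ t + 2 := by linarith
  have h1 : 2 * s ^ α ≤ (s - 2) ^ α + (s + 2) ^ α := by
    have := aux_conv α hα (s - 2) (s + 2) hs2 hs2'
    have e : (s - 2 + (s + 2)) / 2 = s := by ring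
    rwa [e] at this
  have h2 : 2 * t ^ α ≤ (t - 2) ^ α + (t + 2) ^ α := by
    have := aux_conv α hα (t - 2) (t + 2) ht2 ht2'
    have e : (t - 2 + (t + 2)) / 2 = t := by ring
    rwa [e] at this
  have hAB : s ^ α + t ^ α ≤ (A + B) / 2 := by
    rw [hA, hB]; linarith
  have hst : 0 ≤ s ^ α + t ^ α :=
    add_nonneg (Real.rpow_nonneg (by linarith) _) (Real.rpow_nonneg (by linarith) _)
  have hA0 : 0 ≤ A := add_nonneg (Real.rpow_nonneg hs2' _) (Real.rpow_nonneg ht2 _)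
  have hB0 : 0 ≤ B := add_nonneg (Real.rpow_nonneg hs2 _) (Real.rpow_nonneg ht2' _)
  have step1 : (s ^ α + t ^ α) ^ β ≤ ((A + B) / 2) ^ β :=
    Real.rpow_le_rpow hst hAB (by linarith)
  have step2 : 2 * ((A + B) / 2) ^ β ≤ A ^ β + B ^ β :=
    aux_conv β (le_of_lt hβ) A B hA0 hB0
  linarith
end

section
/- Let α ≥ 1 and β > 1 be real numbers, and let s₁ ≥ t₁ > 0 and s₂ ≥ t₂ > 0 be reals. Then (s₁^α + s₂^α)^β + (t₁^α + t₂^α)^β ≥ (s₂^α + t₁^α)^β + (s₁^α + t₂^α)^β, with strict inequality when s₁ > t₁ and s₂ > t₂. -/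
/-!
For `c ≤ a` and `d ≤ b` the pairs `(a + b, c + d)` and `(b + c, a + d)` have the same sum and the
entries of the second lie between those of the first, so writing `b + c` as a convex combination
of `c + d` and `a + b` (and `a + d` as the complementary one) shows
`f (b + c) + f (a + d) ≤ f (a + b) + f (c + d)` for every convex `f`, strictly when `f` is strictly
convex, `c < a` and `d < b`. Apply this to `x ↦ x ^ β`, strictly convex on `[0, ∞)`, with
`a = s₁ ^ α`, `b = s₂ ^ α`, `c = t₁ ^ α`, `d = t₂ ^ α`.
-/

open Set

lemma add_smul_add_smul_eq {R M : Type*} [Semiring R] [AddCommMonoid M] [Module R M] {l m : R}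
    (hlm : l + m = 1) (p q : M) : (l • p + m • q) + (m • p + l • q) = p + q := by
  rw [add_add_add_comm, ← add_smul, add_comm (m • q), ← add_smul, hlm, one_smul, one_smul]

section
variable {𝕜 β : Type*} [Field 𝕜] [LinearOrder 𝕜] [IsStrictOrderedRing 𝕜]
  [AddCommMonoid β] [PartialOrder β] [Module 𝕜 β] {s : Set 𝕜} {f : 𝕜 → β} {a b c d x y : 𝕜}

theorem ConvexOn.map_add_map_le [IsOrderedAddMonoid β] (hf : ConvexOn 𝕜 s f)
    (ha : a ∈ s) (hb : b ∈ s) (hx : x ∈ Icc a b) (hxy : x + y = a + b) :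
    f x + f y ≤ f a + f b := by
  rw [← segment_eq_Icc (hx.1.trans hx.2)] at hx
  obtain ⟨l, m, hl, hm, hlm, rfl⟩ := hx
  obtain rfl : y = m • a + l • b := by
    simp only [smul_eq_mul] at hxy ⊢
    linear_combination hxy - (a + b) * hlm
  exact (add_le_add (hf.2 ha hb hl hm hlm) (hf.2 ha hb hm hl (by rw [add_comm, hlm]))).trans_eq
    (add_smul_add_smul_eq hlm _ _)

theorem StrictConvexOn.map_add_map_lt [IsOrderedCancelAddMonoid β] (hf : StrictConvexOn 𝕜 s f)
    (ha : a ∈ s) (hb : b ∈ s) (hx : x ∈ Ioo a b) (hxy : x + y = a + b) :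
    f x + f y < f a + f b := by
  have hab : a < b := hx.1.trans hx.2
  rw [← openSegment_eq_Ioo hab] at hx
  obtain ⟨l, m, hl, hm, hlm, rfl⟩ := hx
  obtain rfl : y = m • a + l • b := by
    simp only [smul_eq_mul] at hxy ⊢
    linear_combination hxy - (a + b) * hlm
  exact (add_lt_add (hf.2 ha hb hab.ne hl hm hlm)
    (hf.2 ha hb hab.ne hm hl (by rw [add_comm, hlm]))).trans_eq (add_smul_add_smul_eq hlm _ _)

theorem ConvexOn.map_add_add_le [IsOrderedAddMonoid β] (hf : ConvexOn 𝕜 s f)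
    (hab : a + b ∈ s) (hcd : c + d ∈ s) (hca : c ≤ a) (hdb : d ≤ b) :
    f (b + c) + f (a + d) ≤ f (a + b) + f (c + d) :=
  add_comm (f (c + d)) _ ▸ hf.map_add_map_le hcd hab ⟨by linarith, by linarith⟩ (by ring)

theorem StrictConvexOn.map_add_add_lt [IsOrderedCancelAddMonoid β] (hf : StrictConvexOn 𝕜 s f)
    (hab : a + b ∈ s) (hcd : c + d ∈ s) (hca : c < a) (hdb : d < b) :
    f (b + c) + f (a + d) < f (a + b) + f (c + d) :=
  add_comm (f (c + d)) _ ▸ hf.map_add_map_lt hcd hab ⟨by linarith, by linarith⟩ (by ring)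

end

theorem stmt_11 (α β s₁ s₂ t₁ t₂ : ℝ) (hα : 1 ≤ α) (hβ : 1 < β)
    (ht₁ : 0 < t₁) (h₁ : t₁ ≤ s₁) (ht₂ : 0 < t₂) (h₂ : t₂ ≤ s₂) :
    (s₁ ^ α + s₂ ^ α) ^ β + (t₁ ^ α + t₂ ^ α) ^ β ≥
        (s₂ ^ α + t₁ ^ α) ^ β + (s₁ ^ α + t₂ ^ α) ^ β ∧
      (t₁ < s₁ → t₂ < s₂ →
        (s₁ ^ α + s₂ ^ α) ^ β + (t₁ ^ α + t₂ ^ α) ^ β >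
          (s₂ ^ α + t₁ ^ α) ^ β + (s₁ ^ α + t₂ ^ α) ^ β) := by
  have hα₀ : 0 < α := by linarith
  have hf := strictConvexOn_rpow hβ
  have h₁α : t₁ ^ α ≤ s₁ ^ α := Real.rpow_le_rpow ht₁.le h₁ hα₀.le
  have h₂α : t₂ ^ α ≤ s₂ ^ α := Real.rpow_le_rpow ht₂.le h₂ hα₀.le
  have ht : t₁ ^ α + t₂ ^ α ∈ Ici 0 :=
    mem_Ici.2 (add_nonneg (Real.rpow_nonneg ht₁.le α) (Real.rpow_nonneg ht₂.le α))
  have hs : s₁ ^ α + s₂ ^ α ∈ Ici 0 := ht.trans (add_le_add h₁α h₂α)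
  exact ⟨hf.convexOn.map_add_add_le hs ht h₁α h₂α, fun hs₁ hs₂ =>
    hf.map_add_add_lt hs ht (Real.rpow_lt_rpow ht₁.le hs₁ hα₀) (Real.rpow_lt_rpow ht₂.le hs₂ hα₀)⟩
end

section
/- Let α ≥ 1 and β > 1 be real numbers and let l ≥ 3 be an integer. Then 4·((2l)^α + 2^α)^β − ((2l−2)^α + 4^α)^β − ((2l−2)^α + 2^α)^β − (4^α + 2^α)^β − (4^α + 4^α)^β ≥ 0. -/
lemma rpow_incr {α x y d : ℝ} (hα : 1 ≤ α) (hx : 0 ≤ x) (hxy : x ≤ y) (hd : 0 ≤ d) :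
    (x + d) ^ α - x ^ α ≤ (y + d) ^ α - y ^ α := by
  rcases eq_or_lt_of_le hd with rfl | hd
  · simp
  rcases eq_or_lt_of_le hxy with rfl | hxy
  · exact le_rfl
  have hy : 0 ≤ y := hx.trans hxy.le
  have hf := convexOn_rpow hα
  have m1 : x ∈ Set.Ici (0:ℝ) := hx
  have m2 : (x + d) ∈ Set.Ici (0:ℝ) := by simp [Set.mem_Ici]; linarith
  have m3 : y ∈ Set.Ici (0:ℝ) := hy
  have m4 : (y + d) ∈ Set.Ici (0:ℝ) := by simp [Set.mem_Ici]; linarith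
  have h1 := hf.secant_mono m1 m2 m4 (by intro h; nlinarith [h]) (by intro h; nlinarith [h])
    (by linarith)
  have h2 := hf.secant_mono m4 m1 m3 (by intro h; nlinarith [h]) (by intro h; nlinarith [h])
    hxy.le
  have e1 : x + d - x = d := by ring
  rw [e1] at h1
  have key : ((x + d) ^ α - x ^ α) / d ≤ ((y + d) ^ α - y ^ α) / d := by
    refine h1.trans ?_
    have e2 : (x ^ α - (y + d) ^ α) / (x - (y + d)) = ((y + d) ^ α - x ^ α) / (y + d - x) := by
      rw [← neg_div_neg_eq]; ring_nf
    have e3 : (y ^ α - (y + d) ^ α) / (y - (y + d)) = ((y + d) ^ α - y ^ α) / d := by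
      rw [← neg_div_neg_eq]; ring_nf
    rw [e2, e3] at h2; exact h2
  calc (x + d) ^ α - x ^ α = ((x + d) ^ α - x ^ α) / d * d := by field_simp
    _ ≤ ((y + d) ^ α - y ^ α) / d * d := by
        exact mul_le_mul_of_nonneg_right key hd.le
    _ = (y + d) ^ α - y ^ α := by field_simp

theorem stmt_12 (α β : ℝ) (hα : 1 ≤ α) (hβ : 1 < β) (l : ℕ) (hl : 3 ≤ l) :
    4 * ((2 * (l : ℝ)) ^ α + 2 ^ α) ^ β - ((2 * (l : ℝ) - 2) ^ α + 4 ^ α) ^ β -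
        ((2 * (l : ℝ) - 2) ^ α + 2 ^ α) ^ β - ((4 : ℝ) ^ α + 2 ^ α) ^ β -
        ((4 : ℝ) ^ α + 4 ^ α) ^ β ≥ 0 := by
  have hl' : (3:ℝ) ≤ (l:ℝ) := by exact_mod_cast hl
  have h2l : (6:ℝ) ≤ 2 * (l:ℝ) := by linarith
  -- increment bounds
  have i1 : (4:ℝ) ^ α - 2 ^ α ≤ (2 * (l:ℝ)) ^ α - (2 * (l:ℝ) - 2) ^ α := by
    have := rpow_incr (x := 2) (y := 2 * (l:ℝ) - 2) (d := 2) hα (by norm_num)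
      (by linarith) (by norm_num)
    norm_num at this
    linarith [this]
  have i2 : (4:ℝ) ^ α - 2 ^ α ≤ (6:ℝ) ^ α - 4 ^ α := by
    have := rpow_incr (x := 2) (y := 4) (d := 2) hα (by norm_num) (by norm_num) (by norm_num)
    norm_num at this
    linarith [this]
  have mono : ∀ a b : ℝ, 0 ≤ a → a ≤ b → a ^ α ≤ b ^ α := fun a b ha hab =>
    Real.rpow_le_rpow ha hab (by linarith)
  have m1 : (2 * (l:ℝ) - 2) ^ α ≤ (2 * (l:ℝ)) ^ α := mono _ _ (by linarith) (by linarith)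
  have m2 : (6:ℝ) ^ α ≤ (2 * (l:ℝ)) ^ α := mono 6 _ (by norm_num) h2l
  have m3 : (4:ℝ) ^ α ≤ (2 * (l:ℝ)) ^ α := mono 4 _ (by norm_num) (by linarith)
  have p2 : (0:ℝ) < 2 ^ α := Real.rpow_pos_of_pos (by norm_num) α
  have p4 : (0:ℝ) < 4 ^ α := Real.rpow_pos_of_pos (by norm_num) α
  have pl : (0:ℝ) < (2 * (l:ℝ) - 2) ^ α := Real.rpow_pos_of_pos (by linarith) α
  set A : ℝ := (2 * (l:ℝ)) ^ α + 2 ^ α with hA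
  have monoB : ∀ b : ℝ, 0 ≤ b → b ≤ A → b ^ β ≤ A ^ β := fun b hb hbA =>
    Real.rpow_le_rpow hb hbA (by linarith)
  have b1 : ((2 * (l:ℝ) - 2) ^ α + 4 ^ α) ^ β ≤ A ^ β :=
    monoB _ (by positivity) (by rw [hA]; linarith)
  have b2 : ((2 * (l:ℝ) - 2) ^ α + 2 ^ α) ^ β ≤ A ^ β :=
    monoB _ (by positivity) (by rw [hA]; linarith)
  have b3 : ((4:ℝ) ^ α + 2 ^ α) ^ β ≤ A ^ β :=
    monoB _ (by positivity) (by rw [hA]; linarith)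
  have b4 : ((4:ℝ) ^ α + 4 ^ α) ^ β ≤ A ^ β :=
    monoB _ (by positivity) (by rw [hA]; linarith)
  linarith
end

section
/- For every real α > 1 and integer n ≥ 3, 2·((2n)^α + 2^α)^(1/α) + (2^(α+1))^(1/α) − 3·(4^α + 2^α)^(1/α) > ((6^α + 2^α)^(1/α) + (2^(α+1))^(1/α)) − 2·(4^α + 2^α)^(1/α) > 0. -/
/-!
Write `‖(x, y)‖_α = (x ^ α + y ^ α) ^ (1 / α)` and `f x = ‖(x, 2)‖_α`, so that the terms of the
inequalities are `f (2n)`, `f 6`, `f 4` and `f 2 = (2 ^ (α + 1)) ^ (1 / α)`. The first inequality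
reduces to `2 f (2n) > f 6 + f 4`, which holds since `f` is increasing. The second one is
`f 6 + f 2 > 2 f 4 = ‖(8, 4)‖_α`, the strict triangle inequality for the non-proportional vectors
`(6, 2)` and `(2, 2)`; it holds because the unit ball of `‖·‖_α` is strictly convex for `α > 1`.
-/

open Real Set

noncomputable def lpNormPair (α x y : ℝ) : ℝ := (x ^ α + y ^ α) ^ (1 / α)

section lpNormPair

variable {α x y : ℝ}

lemma lpNormPair_pos (hx : 0 < x) (hy : 0 ≤ y) : 0 < lpNormPair α x y := by
  unfold lpNormPair; positivity

lemma lpNormPair_rpow (hα : α ≠ 0) (hx : 0 ≤ x) (hy : 0 ≤ y) :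
    lpNormPair α x y ^ α = x ^ α + y ^ α := by
  rw [lpNormPair, one_div, rpow_inv_rpow (by positivity) hα]

lemma lpNormPair_lt_iff (hα : 0 < α) (hx : 0 ≤ x) (hy : 0 ≤ y) {r : ℝ} (hr : 0 ≤ r) :
    lpNormPair α x y < r ↔ x ^ α + y ^ α < r ^ α := by
  rw [lpNormPair, one_div, rpow_inv_lt_iff_of_pos (by positivity) hr hα]

lemma lpNormPair_mul (hα : α ≠ 0) {t : ℝ} (ht : 0 ≤ t) (hx : 0 ≤ x) (hy : 0 ≤ y) :
    lpNormPair α (t * x) (t * y) = t * lpNormPair α x y := by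
  rw [lpNormPair, lpNormPair, mul_rpow ht hx, mul_rpow ht hy, ← mul_add,
    mul_rpow (by positivity) (by positivity), one_div, rpow_rpow_inv ht hα]

lemma strictMonoOn_lpNormPair_left (hα : 0 < α) (hy : 0 ≤ y) :
    StrictMonoOn (fun x ↦ lpNormPair α x y) (Ici 0) := by
  intro x (hx : 0 ≤ x) x' _ hxx'
  exact rpow_lt_rpow (by positivity) (add_lt_add_left (rpow_lt_rpow hx hxx' hα) _)
    (by positivity)

/-- Strict convexity of the unit ball of `‖·‖_α` on the closed positive quadrant. -/
lemma rpow_add_rpow_lt_one_of_ne (hα : 1 < α) {z y w l m : ℝ}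
    (hx : 0 ≤ x) (hz : 0 ≤ z) (hy : 0 ≤ y) (hw : 0 ≤ w)
    (hxz : x ^ α + z ^ α = 1) (hyw : y ^ α + w ^ α = 1) (hne : (x, z) ≠ (y, w))
    (hl : 0 < l) (hm : 0 < m) (hlm : l + m = 1) :
    (l * x + m * y) ^ α + (l * z + m * w) ^ α < 1 := by
  have hconv := strictConvexOn_rpow hα
  have hle {s t : ℝ} (hs : 0 ≤ s) (ht : 0 ≤ t) : (l * s + m * t) ^ α ≤ l * s ^ α + m * t ^ α :=
    hconv.convexOn.2 hs ht hl.le hm.le hlm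
  have hlt {s t : ℝ} (hs : 0 ≤ s) (ht : 0 ≤ t) (hst : s ≠ t) :
      (l * s + m * t) ^ α < l * s ^ α + m * t ^ α :=
    hconv.2 hs ht hst hl hm hlm
  calc (l * x + m * y) ^ α + (l * z + m * w) ^ α
      < (l * x ^ α + m * y ^ α) + (l * z ^ α + m * w ^ α) := by
        rcases eq_or_ne x y with rfl | hxy
        · exact add_lt_add_of_le_of_lt (hle hx hy) (hlt hz hw fun h ↦ hne (by rw [h]))
        · exact add_lt_add_of_lt_of_le (hlt hx hy hxy) (hle hz hw)
    _ = 1 := by linear_combination l * hxz + m * hyw + hlm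

lemma lpNormPair_add_lt (hα : 1 < α) {a b c d : ℝ} (ha : 0 < a) (hb : 0 ≤ b) (hc : 0 < c)
    (hd : 0 ≤ d) (hne : a * d ≠ b * c) :
    lpNormPair α (a + c) (b + d) < lpNormPair α a b + lpNormPair α c d := by
  have hα0 : 0 < α := zero_lt_one.trans hα
  set A := lpNormPair α a b
  set C := lpNormPair α c d
  have hA : 0 < A := lpNormPair_pos ha hb
  have hC : 0 < C := lpNormPair_pos hc hd
  have hunit {p q r : ℝ} (hp : 0 ≤ p) (hq : 0 ≤ q) (hr : 0 < r) (h : lpNormPair α p q = r) :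
      (p / r) ^ α + (q / r) ^ α = 1 := by
    rw [div_rpow hp hr.le, div_rpow hq hr.le, ← add_div, ← lpNormPair_rpow hα0.ne' hp hq, h,
      div_self (by positivity)]
  have hdir : (a / A, b / A) ≠ (c / C, d / C) := by
    intro h
    obtain ⟨hac, hbd⟩ := Prod.mk.inj h
    rw [div_eq_div_iff hA.ne' hC.ne'] at hac hbd
    exact hne (mul_right_cancel₀ (mul_pos hA hC).ne'
      (by linear_combination d * A * hac - c * A * hbd))
  -- `(a + c, b + d) / (A + C)` is the convex combination of the unit vectors `(a, b) / A` and
  -- `(c, d) / C` with weights `A / (A + C)` and `C / (A + C)`.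
  have hball := rpow_add_rpow_lt_one_of_ne hα (by positivity) (by positivity) (by positivity)
    (by positivity) (hunit ha.le hb hA rfl) (hunit hc.le hd hC rfl) hdir
    (div_pos hA (add_pos hA hC)) (div_pos hC (add_pos hA hC)) (by field_simp)
  have hsum {p q : ℝ} : A / (A + C) * (p / A) + C / (A + C) * (q / C) = (p + q) / (A + C) := by
    field_simp
  rw [hsum, hsum, div_rpow (by positivity) (by positivity),
    div_rpow (by positivity) (by positivity), ← add_div, div_lt_one (by positivity)] at hball
  exact (lpNormPair_lt_iff hα0 (by positivity) (by positivity) (by positivity)).2 hball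

end lpNormPair

theorem stmt_19 (α : ℝ) (hα : 1 < α) (n : ℕ) (hn : 3 ≤ n) :
    2 * ((2 * (n : ℝ)) ^ α + 2 ^ α) ^ (1 / α) + ((2 : ℝ) ^ (α + 1)) ^ (1 / α) -
        3 * ((4 : ℝ) ^ α + 2 ^ α) ^ (1 / α) >
      (((6 : ℝ) ^ α + 2 ^ α) ^ (1 / α) + ((2 : ℝ) ^ (α + 1)) ^ (1 / α)) -
        2 * ((4 : ℝ) ^ α + 2 ^ α) ^ (1 / α) ∧
      (((6 : ℝ) ^ α + 2 ^ α) ^ (1 / α) + ((2 : ℝ) ^ (α + 1)) ^ (1 / α)) -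
        2 * ((4 : ℝ) ^ α + 2 ^ α) ^ (1 / α) > 0 := by
  have hα0 : 0 < α := zero_lt_one.trans hα
  have hmono := strictMonoOn_lpNormPair_left hα0 zero_le_two
  have h4_6 : lpNormPair α 4 2 < lpNormPair α 6 2 :=
    hmono (by norm_num : (0 : ℝ) ≤ 4) (by norm_num : (0 : ℝ) ≤ 6) (by norm_num)
  have h6_2n : lpNormPair α 6 2 ≤ lpNormPair α (2 * n) 2 :=
    (hmono.le_iff_le (by norm_num : (0 : ℝ) ≤ 6) (by positivity : (0 : ℝ) ≤ 2 * n)).2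
      (by norm_cast; omega)
  have htwo : ((2 : ℝ) ^ (α + 1)) ^ (1 / α) = lpNormPair α 2 2 := by
    rw [lpNormPair, rpow_add_one two_ne_zero, mul_two]
  have hdouble : lpNormPair α (6 + 2) (2 + 2) = 2 * lpNormPair α 4 2 := by
    rw [← lpNormPair_mul hα0.ne' zero_le_two (by norm_num) zero_le_two]
    norm_num
  have hmink := lpNormPair_add_lt hα (a := 6) (b := 2) (c := 2) (d := 2)
    (by norm_num) zero_le_two zero_lt_two zero_le_two (by norm_num)
  rw [htwo]
  unfold lpNormPair at *
  constructor <;> linarith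
end
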